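/- arXiv:2301.03792 — 5 statements merged into one kernel-verified Lean document; each statement's English description precedes it below -/
import Mathlib

section
/- Let n ≥ 1 and consider ℤ_n with the dihedral operation x*y = 2y − x. Let R₁, R₂ : ℤ_n × ℤ_n → ℤ_n satisfy: (1) R₂(x,y) = R₁(x,y) + y − x for all x,y; (2) R₁(x,y) = R₁(2x−y, x) + y − x for all x,y; and (3) R₁(x, 2y−z) = 2y − R₁(2y−x, z) for all x,y,z. Then the following singquandle identities hold for all x,y,z ∈ ℤ_n: (2.2.4) (y*z)*R₂(x,z) = (y*x)*R₁(x,z); (2.2.5) R₁(x,y) = R₂(y*x, x); (2.2.6) R₂(x,y) = R₁(y*x, x) * R₂(y*x, x); and (2.2.7) R₁(x*y, z)*y = R₁(x, z*y). -/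
/-- on the dihedral quandle `ℤ_n` with `x*y = 2y - x`, if `R₁, R₂` satisfy
conditions (1)–(3), then the singquandle identities (2.2.4)–(2.2.7) hold. -/
theorem stmt_3 (n : ℕ) (hn : 1 ≤ n)
    (op : ZMod n → ZMod n → ZMod n) (hop : ∀ x y, op x y = 2 * y - x)
    (R1 R2 : ZMod n → ZMod n → ZMod n)
    (h1 : ∀ x y, R2 x y = R1 x y + y - x)
    (h2 : ∀ x y, R1 x y = R1 (2 * x - y) x + y - x)
    (h3 : ∀ x y z, R1 x (2 * y - z) = 2 * y - R1 (2 * y - x) z) :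
    (∀ x y z, op (op y z) (R2 x z) = op (op y x) (R1 x z)) ∧   -- (2.2.4)
    (∀ x y, R1 x y = R2 (op y x) x) ∧                          -- (2.2.5)
    (∀ x y, R2 x y = op (R1 (op y x) x) (R2 (op y x) x)) ∧     -- (2.2.6)
    (∀ x y z, op (R1 (op x y) z) y = R1 x (op z y)) :=         -- (2.2.7)
  by
  refine ⟨fun x y z => ?_, fun x y => ?_, fun x y => ?_, fun x y z => ?_⟩
  · simp only [hop, h1]; ring
  · rw [hop, h1, h2 x y]; ring
  · rw [hop, hop, h1, h1, h2 x y]; ring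
  · rw [hop, hop, hop, h3]
end

section
/- Let A be a commutative ring with elements t, B ∈ A satisfying t² = 1 and B(1+t) = 0, and let M be an A-module. Define on M: x*y = tx + (1−t)y, R₁(x,y) = (1−t−B)x + (t+B)y, and R₂(x,y) = (1−B)x + By. Then (M, *) is an involutive quandle (x*x = x, (x*y)*y = x, (x*y)*z = (x*z)*(y*z)), the singquandle identities (2.2.4) (y*z)*R₂(x,z) = (y*x)*R₁(x,z), (2.2.5) R₁(x,y) = R₂(y*x,x), (2.2.6) R₂(x,y) = R₁(y*x,x)*R₂(y*x,x), (2.2.7) R₁(x*y,z)*y = R₁(x,z*y), (2.2.8) R₂(x*y,z) = R₂(x,z*y)*y hold for all x,y,z ∈ M, and with *₁ = *₂ = * the disingquandle axioms (4.2.1)–(4.2.6) hold for all x,y,z ∈ M. -/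
/-- for a commutative ring `A` with `t² = 1`, `B(1+t) = 0` and an `A`-module
`M`, the Alexander-type operations `x*y = tx+(1-t)y`, `R₁(x,y) = (1-t-B)x+(t+B)y`,
`R₂(x,y) = (1-B)x+By` make `M` an involutive quandle satisfying the singquandle and
disingquandle identities (with `*₁ = *₂ = *`). -/
theorem stmt_9 {A : Type*} [CommRing A] (t B : A)
    (ht : t ^ 2 = 1) (hB : B * (1 + t) = 0)
    {M : Type*} [AddCommGroup M] [Module A M]
    (op : M → M → M) (hop : ∀ x y, op x y = t • x + (1 - t) • y)
    (R1 R2 : M → M → M)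
    (hR1 : ∀ x y, R1 x y = (1 - t - B) • x + (t + B) • y)
    (hR2 : ∀ x y, R2 x y = (1 - B) • x + B • y) :
    -- involutive quandle
    (∀ x, op x x = x) ∧
    (∀ x y, op (op x y) y = x) ∧
    (∀ x y z, op (op x y) z = op (op x z) (op y z)) ∧
    -- singquandle identities
    (∀ x y z, op (op y z) (R2 x z) = op (op y x) (R1 x z)) ∧   -- (2.2.4)
    (∀ x y, R1 x y = R2 (op y x) x) ∧                          -- (2.2.5)
    (∀ x y, R2 x y = op (R1 (op y x) x) (R2 (op y x) x)) ∧     -- (2.2.6)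
    (∀ x y z, op (R1 (op x y) z) y = R1 x (op z y)) ∧          -- (2.2.7)
    (∀ x y z, R2 (op x y) z = op (R2 x (op z y)) y) ∧          -- (2.2.8)
    -- disingquandle axioms with *₁ = *₂ = op
    (∀ x y z, op (op x y) z = op (op x z) (op y z)) ∧          -- (4.2.1)
    (∀ x y z, op (op x y) z = op (op x z) (op y z)) ∧          -- (4.2.2)
    (∀ x y z, op (op y z) (R2 x z) = op (op y x) (R1 x z)) ∧   -- (4.2.3)
    (∀ x y z, op (op y z) (R2 x z) = op (op y x) (R1 x z)) ∧   -- (4.2.4)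
    (∀ x y, R2 x y = op (R1 (op y x) x) (R2 (op y x) x)) ∧     -- (4.2.5)
    (∀ x y, R2 x y = op (R1 (op y x) x) (R2 (op y x) x)) :=    -- (4.2.6)
by
  refine ⟨?_,?_,?_,?_,?_,?_,?_,?_,?_,?_,?_,?_,?_,?_⟩ <;> intros <;>
    simp only [hop, hR1, hR2] <;> match_scalars <;>
    first
      | ring1
      | linear_combination ht
      | linear_combination -ht
      | linear_combination hB
      | linear_combination -hB
      | linear_combination t*ht + hB
      | linear_combination -(t*ht) - hB
      | linear_combination (1-t)*ht + (1-t)*hB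
      | linear_combination (t-1)*ht + (t-1)*hB
      | linear_combination (1-t)*hB
      | linear_combination (t-1)*hB
end

section
/- Let G be an additive abelian group and let m ∈ ℤ. Define R₁(x,y) = m·x + (2m+1)·y and R₂(x,y) = (m−1)·x + 2(m+1)·y for x,y ∈ G (integer scalar multiples). Then for all x,y ∈ G: R₂(x,y) = R₁(x,y) + y − x, and R₁(x,y) = R₁(−x + 2y, x) + y − x. -/
/-- on an additive abelian group, `R₁(x,y) = m·x + (2m+1)·y` and
`R₂(x,y) = (m−1)·x + 2(m+1)·y` satisfy `R₂(x,y) = R₁(x,y) + y − x` and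
`R₁(x,y) = R₁(−x + 2y, x) + y − x`. -/
theorem stmt_10 {G : Type*} [AddCommGroup G] (m : ℤ)
    (R1 R2 : G → G → G)
    (hR1 : ∀ x y, R1 x y = m • x + (2 * m + 1) • y)
    (hR2 : ∀ x y, R2 x y = (m - 1) • x + (2 * (m + 1)) • y) :
    (∀ x y : G, R2 x y = R1 x y + y - x) ∧
    (∀ x y : G, R1 x y = R1 (-x + (2 : ℤ) • y) x + y - x) :=
  ⟨fun x y => by simp only [hR1, hR2]; module,
   fun x y => by simp only [hR1]; module⟩
end

section
/- In ℤ₆ define R₁(x,y) = x + 3 and R₂(x,y) = 3x² + 3x + y + 3. Then for every pair (x,y) ∈ ℤ₆ × ℤ₆, one has R₁(R₁(x,y), R₂(x,y)) = x and R₂(R₁(x,y), R₂(x,y)) = y. Consequently, the set of solutions (x,y) ∈ ℤ₆² of this system is all of ℤ₆², which has exactly 36 elements. -/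
/-- in `ℤ₆` with `R₁(x,y) = x+3`, `R₂(x,y) = 3x²+3x+y+3`, every pair
`(x,y)` satisfies `R₁(R₁(x,y), R₂(x,y)) = x` and `R₂(R₁(x,y), R₂(x,y)) = y`; hence the
solution set of this system is all of `ℤ₆²`, which has exactly 36 elements. -/
theorem stmt_13
    (R1 R2 : ZMod 6 → ZMod 6 → ZMod 6)
    (hR1 : ∀ x y, R1 x y = x + 3)
    (hR2 : ∀ x y, R2 x y = 3 * x ^ 2 + 3 * x + y + 3) :
    (∀ x y : ZMod 6, R1 (R1 x y) (R2 x y) = x ∧ R2 (R1 x y) (R2 x y) = y) ∧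
    ({p : ZMod 6 × ZMod 6 |
        R1 (R1 p.1 p.2) (R2 p.1 p.2) = p.1 ∧ R2 (R1 p.1 p.2) (R2 p.1 p.2) = p.2}
      = Set.univ) ∧
    Nat.card {p : ZMod 6 × ZMod 6 |
        R1 (R1 p.1 p.2) (R2 p.1 p.2) = p.1 ∧ R2 (R1 p.1 p.2) (R2 p.1 p.2) = p.2} = 36 := by
  have key : ∀ x y : ZMod 6, R1 (R1 x y) (R2 x y) = x ∧ R2 (R1 x y) (R2 x y) = y := by
    intro x y
    simp only [hR1, hR2]
    constructor <;> · revert x y; decide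
  refine ⟨key, ?_, ?_⟩
  · ext p; simpa using key p.1 p.2
  · have : {p : ZMod 6 × ZMod 6 |
        R1 (R1 p.1 p.2) (R2 p.1 p.2) = p.1 ∧ R2 (R1 p.1 p.2) (R2 p.1 p.2) = p.2}
        = Set.univ := by ext p; simpa using key p.1 p.2
    rw [this]
    rw [Nat.card_eq_fintype_card]; decide
end

section
/- In ℤ₆ define x*y = −x+2y, R₁(x,y) = x+3, and R₂(x,y) = 3x²+3x+y+3. Then the set of pairs (x,y) ∈ ℤ₆ × ℤ₆ satisfying the two equations R₂(y*R₁(x,y), x*(y*R₁(x,y))) = R₁(x,y) and R₁(y*R₁(x,y), x*(y*R₁(x,y))) = R₂(x,y)*y is exactly {(x,x) : x ∈ ℤ₆} ∪ {(x, x+3) : x ∈ ℤ₆}, which has exactly 12 elements. -/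
/-- in `ℤ₆` with `x*y = −x+2y`, `R₁(x,y) = x+3`, `R₂(x,y) = 3x²+3x+y+3`,
the solution set of the coloring equations of `L₃` is exactly
`{(x,x) : x ∈ ℤ₆} ∪ {(x,x+3) : x ∈ ℤ₆}`, which has exactly 12 elements. -/
theorem stmt_16
    (op : ZMod 6 → ZMod 6 → ZMod 6) (hop : ∀ x y, op x y = -x + 2 * y)
    (R1 R2 : ZMod 6 → ZMod 6 → ZMod 6)
    (hR1 : ∀ x y, R1 x y = x + 3)
    (hR2 : ∀ x y, R2 x y = 3 * x ^ 2 + 3 * x + y + 3) :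
    ({p : ZMod 6 × ZMod 6 |
        R2 (op p.2 (R1 p.1 p.2)) (op p.1 (op p.2 (R1 p.1 p.2))) = R1 p.1 p.2 ∧
        R1 (op p.2 (R1 p.1 p.2)) (op p.1 (op p.2 (R1 p.1 p.2))) = op (R2 p.1 p.2) p.2}
      = {p : ZMod 6 × ZMod 6 | p.2 = p.1} ∪ {p : ZMod 6 × ZMod 6 | p.2 = p.1 + 3}) ∧
    Nat.card {p : ZMod 6 × ZMod 6 |
        R2 (op p.2 (R1 p.1 p.2)) (op p.1 (op p.2 (R1 p.1 p.2))) = R1 p.1 p.2 ∧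
        R1 (op p.2 (R1 p.1 p.2)) (op p.1 (op p.2 (R1 p.1 p.2))) = op (R2 p.1 p.2) p.2} = 12 := by
  have h1 : ({p : ZMod 6 × ZMod 6 |
        R2 (op p.2 (R1 p.1 p.2)) (op p.1 (op p.2 (R1 p.1 p.2))) = R1 p.1 p.2 ∧
        R1 (op p.2 (R1 p.1 p.2)) (op p.1 (op p.2 (R1 p.1 p.2))) = op (R2 p.1 p.2) p.2}
      = {p : ZMod 6 × ZMod 6 | p.2 = p.1} ∪ {p : ZMod 6 × ZMod 6 | p.2 = p.1 + 3}) := by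
    ext ⟨x, y⟩
    simp only [hop, hR1, hR2, Set.mem_setOf_eq, Set.mem_union]
    revert x y
    decide
  refine ⟨h1, ?_⟩
  rw [h1]
  have : ({p : ZMod 6 × ZMod 6 | p.2 = p.1} ∪ {p : ZMod 6 × ZMod 6 | p.2 = p.1 + 3})
      = ↑((Finset.univ : Finset (ZMod 6 × ZMod 6)).filter
          (fun p => p.2 = p.1 ∨ p.2 = p.1 + 3)) := by
    ext p
    simp [Set.mem_setOf_eq]
  rw [this, Nat.card_eq_card_finite_toFinset (Set.toFinite _)]
  rw [Set.toFinite_toFinset, Finset.toFinset_coe]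
  decide
end
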